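/- arXiv:1601.02912 — 2 statements merged into one kernel-verified Lean document; each statement's English description precedes it below -/
import Mathlib

section
/- Let J : ℝ^n → ℝ be convex and absolutely one-homogeneous, let N(J) = {u : J(u) = 0}, and let c₀ > 0 satisfy c₀·‖w‖ ≤ J(w) for all w ∈ N(J)^⊥. Let f ∈ ℝ^n and let u : [0, ∞) → ℝ^n be Lipschitz continuous with u(0) = f such that for almost every t > 0, u is differentiable at t with −u'(t) ∈ ∂J(u(t)) (the gradient flow of J). Then P₀(u(t)) = P₀(f) for all t ≥ 0, ‖Q₀(u(t))‖ ≤ ‖Q₀(f)‖ − c₀·t whenever Q₀(u(s)) ≠ 0 for all s ≤ t, and u(t) = P₀(f) for all t ≥ ‖Q₀(f)‖/c₀ (finite time extinction). -/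
/-!
Subgradients of `J` are orthogonal to `N(J)`, because `J` is invariant under translation by
elements of `N(J)`; hence the velocity of the flow lies in `N(J)ᗮ` and `P₀ u` is constant.
For `r = Q₀ u` and `p ∈ ∂J(u)`, homogeneity gives `⟪p, r⟫ = ⟪p, u⟫ ≥ J u ≥ J r ≥ c₀ ‖r‖`, so
`d/dt ‖r‖ = -⟪p, r⟫ / ‖r‖ ≤ -c₀` while `r ≠ 0`, and `‖r‖` never increases. These differential
inequalities hold only almost everywhere; they are integrated using that Lipschitz functions
are absolutely continuous.
-/

open RealInnerProductSpace

/-- The subdifferential of `J` at `u`: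
`∂J(u) = {p | ∀ v, J v ≥ J u + ⟪p, v - u⟫}`. -/
def subdiff {n : ℕ} (J : EuclideanSpace ℝ (Fin n) → ℝ)
    (u : EuclideanSpace ℝ (Fin n)) : Set (EuclideanSpace ℝ (Fin n)) :=
  {p | ∀ v, J u + ⟪p, v - u⟫ ≤ J v}

open Set MeasureTheory Filter

theorem ae_mem_Icc_imp_of_ae_mem_Ioo {p : ℝ → Prop} {a b : ℝ}
    (h : ∀ᵐ t, t ∈ Ioo a b → p t) : ∀ᵐ t, t ∈ Icc a b → p t := by
  filter_upwards [h, Ioo_ae_eq_Icc.mem_iff] with t ht hIoo hIcc using ht (hIoo.2 hIcc)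

theorem AbsolutelyContinuousOnInterval.sub_le_mul_of_ae_hasDerivAt_le {g : ℝ → ℝ} {a b C : ℝ}
    (hg : AbsolutelyContinuousOnInterval g a b) (hab : a ≤ b)
    (hd : ∀ᵐ t, t ∈ Ioo a b → ∃ g', HasDerivAt g g' t ∧ g' ≤ C) :
    g b - g a ≤ C * (b - a) := by
  have hle : deriv g ≤ᵐ[volume.restrict (Icc a b)] fun _ => C := by
    rw [EventuallyLE, ae_restrict_iff' measurableSet_Icc]
    filter_upwards [ae_mem_Icc_imp_of_ae_mem_Ioo hd] with t ht hmem
    obtain ⟨g', hg', hle⟩ := ht hmem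
    rwa [hg'.deriv]
  calc g b - g a = ∫ t in a..b, deriv g t := hg.integral_deriv_eq_sub.symm
    _ ≤ ∫ _ in a..b, C :=
      intervalIntegral.integral_mono_ae_restrict hab hg.intervalIntegrable_deriv
        intervalIntegrable_const hle
    _ = C * (b - a) := by simp [mul_comm]

theorem LipschitzOnWith.norm_sub_const {E : Type*} [SeminormedAddCommGroup E] {u : ℝ → E}
    {L : NNReal} {s : Set ℝ} (hu : LipschitzOnWith L u s) (x : E) : LipschitzOnWith L (‖u · - x‖) s := by
  simpa [Function.comp_def] using lipschitzWith_one_norm.comp_lipschitzOnWith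
    (hu.sub (LipschitzWith.const x).lipschitzOnWith)

section InnerProductSpace

variable {E : Type*} [NormedAddCommGroup E] [InnerProductSpace ℝ E]

theorem HasDerivAt.norm {f : ℝ → E} {f' : E} {t : ℝ} (hf : HasDerivAt f f' t) (h0 : f t ≠ 0) :
    HasDerivAt (‖f ·‖) (⟪f t, f'⟫ / ‖f t‖) t := by
  have hsq := hf.norm_sq.sqrt (by positivity)
  simp only [Real.sqrt_sq (norm_nonneg _)] at hsq
  convert hsq using 1
  field_simp

theorem Submodule.starProjection_eq_of_ae_hasDerivAt_mem_orthogonal (K : Submodule ℝ E)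
    [K.HasOrthogonalProjection] {u : ℝ → E} {L : NNReal} {a b : ℝ} (hab : a ≤ b)
    (hu : LipschitzOnWith L u (Icc a b))
    (hd : ∀ᵐ t, t ∈ Ioo a b → ∃ u', HasDerivAt u u' t ∧ u' ∈ Kᗮ) :
    K.starProjection (u b) = K.starProjection (u a) := by
  rw [← uIcc_of_le hab] at hu
  have hac := (K.starProjection.lipschitz.comp_lipschitzOnWith hu).absolutelyContinuousOnInterval
  obtain ⟨C, hC⟩ := hac.const_of_ae_hasDerivAt_zero <| by
    rw [uIcc_of_le hab]
    filter_upwards [ae_mem_Icc_imp_of_ae_mem_Ioo hd] with t ht hmem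
    obtain ⟨u', hu', horth⟩ := ht hmem
    simpa [(K.starProjection_apply_eq_zero_iff).2 horth] using
      K.starProjection.hasFDerivAt.comp_hasDerivAt t hu'
  exact (hC b right_mem_uIcc).trans (hC a left_mem_uIcc).symm

theorem norm_sub_le_sub_mul_of_ae_inner_deriv_le {u : ℝ → E} {x : E} {L : NNReal} {a b c : ℝ}
    (hab : a ≤ b) (hu : LipschitzOnWith L u (Icc a b)) (hne : ∀ t ∈ Ioo a b, u t ≠ x)
    (hd : ∀ᵐ t, t ∈ Ioo a b → ∃ u', HasDerivAt u u' t ∧ ⟪u t - x, u'⟫ ≤ -(c * ‖u t - x‖)) :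
    ‖u b - x‖ ≤ ‖u a - x‖ - c * (b - a) := by
  rw [← uIcc_of_le hab] at hu
  have hac := (hu.norm_sub_const x).absolutelyContinuousOnInterval
  have := hac.sub_le_mul_of_ae_hasDerivAt_le (C := -c) hab <| by
    filter_upwards [hd] with t ht hmem
    obtain ⟨u', hu', hle⟩ := ht hmem
    have hr : u t - x ≠ 0 := sub_ne_zero.2 (hne t hmem)
    exact ⟨_, (hu'.sub_const x).norm hr, (div_le_iff₀ (norm_pos_iff.2 hr)).2 (by linarith)⟩
  linarith

theorem norm_sub_le_of_ae_inner_deriv_nonpos {u : ℝ → E} {x : E} {L : NNReal} {a b : ℝ}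
    (hab : a ≤ b) (hu : LipschitzOnWith L u (Icc a b))
    (hd : ∀ᵐ t, t ∈ Ioo a b → ∃ u', HasDerivAt u u' t ∧ ⟪u t - x, u'⟫ ≤ 0) :
    ‖u b - x‖ ≤ ‖u a - x‖ := by
  rw [← uIcc_of_le hab] at hu
  have hac := (hu.norm_sub_const x).absolutelyContinuousOnInterval
  -- unlike the norm, its square is differentiable also where `u t = x`
  have hsq : AbsolutelyContinuousOnInterval (‖u · - x‖ ^ 2) a b := by
    convert hac.mul hac using 1
    ext t
    exact sq _
  have := hsq.sub_le_mul_of_ae_hasDerivAt_le (C := 0) hab <| by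
    filter_upwards [hd] with t ht hmem
    obtain ⟨u', hu', hle⟩ := ht hmem
    exact ⟨_, (hu'.sub_const x).norm_sq, by linarith⟩
  exact (sq_le_sq₀ (norm_nonneg _) (norm_nonneg _)).1 (by linarith)

theorem eq_of_ae_inner_deriv_le_neg_mul_norm {u : ℝ → E} {x : E} {L : NNReal} {c t : ℝ}
    (hc : 0 < c) (hu : LipschitzOnWith L u (Ici 0))
    (hd : ∀ᵐ s, 0 < s → ∃ u', HasDerivAt u u' s ∧ ⟪u s - x, u'⟫ ≤ -(c * ‖u s - x‖))
    (ht : ‖u 0 - x‖ / c ≤ t) : u t = x := by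
  have hT : 0 ≤ ‖u 0 - x‖ / c := by positivity
  obtain ⟨t₀, ⟨ht₀, ht₀T⟩, hut₀⟩ : ∃ t₀ ∈ Icc 0 (‖u 0 - x‖ / c), u t₀ = x := by
    by_contra! hne
    have := norm_sub_le_sub_mul_of_ae_inner_deriv_le hT (hu.mono Icc_subset_Ici_self)
      (fun s hs => hne s (Ioo_subset_Icc_self hs)) <| by
        filter_upwards [hd] with s hs hmem using hs hmem.1
    rw [sub_zero, mul_div_cancel₀ _ hc.ne', sub_self, norm_le_zero_iff, sub_eq_zero] at this
    exact hne _ ⟨hT, le_rfl⟩ this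
  have hstay := norm_sub_le_of_ae_inner_deriv_nonpos (ht₀T.trans ht)
    (hu.mono (Icc_subset_Ici_self.trans (Ici_subset_Ici.2 ht₀))) <| by
      filter_upwards [hd] with s hs hmem
      obtain ⟨u', hu', hle⟩ := hs (ht₀.trans_lt hmem.1)
      exact ⟨u', hu', hle.trans (neg_nonpos.2 (by positivity))⟩
  rwa [hut₀, sub_self, norm_zero, norm_le_zero_iff, sub_eq_zero] at hstay

end InnerProductSpace

def AbsHomogeneous {E : Type*} [AddCommGroup E] [Module ℝ E] (J : E → ℝ) : Prop :=
  ∀ (s : ℝ) (u : E), J (s • u) = |s| * J u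

namespace AbsHomogeneous

variable {E : Type*} [AddCommGroup E] [Module ℝ E] {J : E → ℝ}

theorem map_zero (hJ : AbsHomogeneous J) : J 0 = 0 := by
  simpa using hJ 0 0

theorem map_neg (hJ : AbsHomogeneous J) (x : E) : J (-x) = J x := by
  simpa using hJ (-1) x

theorem map_add_le (hJ : AbsHomogeneous J) (hconv : ConvexOn ℝ univ J) (x y : E) :
    J (x + y) ≤ J x + J y := by
  have hmid := hconv.2 (mem_univ x) (mem_univ y) (by norm_num : (0 : ℝ) ≤ 1 / 2)
    (by norm_num : (0 : ℝ) ≤ 1 / 2) (by norm_num)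
  rw [← smul_add, hJ] at hmid
  simp only [smul_eq_mul] at hmid
  norm_num at hmid
  linarith

end AbsHomogeneous

section Subdifferential

variable {n : ℕ} {J : EuclideanSpace ℝ (Fin n) → ℝ} {x p : EuclideanSpace ℝ (Fin n)}

theorem le_inner_of_mem_subdiff (hJ0 : J 0 = 0) (hp : p ∈ subdiff J x) : J x ≤ ⟪p, x⟫ := by
  have := hp 0
  rw [zero_sub, inner_neg_right, hJ0] at this
  linarith

theorem mem_orthogonal_of_mem_subdiff {N : Submodule ℝ (EuclideanSpace ℝ (Fin n))}
    (hadd : ∀ x y, J (x + y) ≤ J x + J y) (hN : ∀ w ∈ N, J w = 0) (hp : p ∈ subdiff J x) :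
    p ∈ Nᗮ := by
  have hle : ∀ w ∈ N, ⟪p, w⟫ ≤ 0 := fun w hw => by
    have := hp (x + w)
    rw [add_sub_cancel_left] at this
    linarith [hadd x w, hN w hw]
  refine (Submodule.mem_orthogonal' _ _).2 fun w hw => ?_
  have := hle (-w) (N.neg_mem hw)
  rw [inner_neg_right] at this
  linarith [hle w hw]

theorem mul_norm_le_inner_of_mem_subdiff {N : Submodule ℝ (EuclideanSpace ℝ (Fin n))} {c₀ : ℝ}
    (hJ : AbsHomogeneous J) (hconv : ConvexOn ℝ univ J) (hN : ∀ w ∈ N, J w = 0)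
    (hlower : ∀ w ∈ Nᗮ, c₀ * ‖w‖ ≤ J w) (hp : p ∈ subdiff J x) :
    c₀ * ‖x - N.starProjection x‖ ≤ ⟪p, x - N.starProjection x⟫ := by
  have hP : ⟪p, N.starProjection x⟫ = 0 :=
    (Submodule.mem_orthogonal' _ _).1
      (mem_orthogonal_of_mem_subdiff (hJ.map_add_le hconv) hN hp) _ (N.starProjection_apply_mem x)
  calc c₀ * ‖x - N.starProjection x‖ ≤ J (x - N.starProjection x) :=
        hlower _ (N.sub_starProjection_mem_orthogonal x)
    _ ≤ J x + J (-N.starProjection x) := by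
        rw [sub_eq_add_neg]; exact hJ.map_add_le hconv _ _
    _ = J x := by rw [hJ.map_neg, hN _ (N.starProjection_apply_mem x), add_zero]
    _ ≤ ⟪p, x - N.starProjection x⟫ := by
        rw [inner_sub_right, hP, sub_zero]; exact le_inner_of_mem_subdiff hJ.map_zero hp

end Subdifferential

/-- Finite time extinction of the gradient flow: for the gradient
flow `u' ∈ -∂J(u)`, `u(0) = f`, the nullspace component is conserved,
`‖Q₀(u t)‖` decreases at rate at least `c₀`, and `u t = P₀ f` for
`t ≥ ‖Q₀ f‖ / c₀`.  Here `P₀` is the orthogonal projection onto `N(J)` and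
`Q₀ = Id - P₀`. -/
theorem gradient_flow_finite_time_extinction {n : ℕ}
    (J : EuclideanSpace ℝ (Fin n) → ℝ)
    (hconv : ConvexOn ℝ Set.univ J)
    (hhom : ∀ (s : ℝ) (u : EuclideanSpace ℝ (Fin n)), J (s • u) = |s| * J u)
    (N : Submodule ℝ (EuclideanSpace ℝ (Fin n)))
    (hN : (N : Set (EuclideanSpace ℝ (Fin n))) = {u | J u = 0})
    (c₀ : ℝ) (hc₀ : 0 < c₀)
    (hlower : ∀ w ∈ Nᗮ, c₀ * ‖w‖ ≤ J w)
    (f : EuclideanSpace ℝ (Fin n))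
    (u : ℝ → EuclideanSpace ℝ (Fin n))
    (hLip : ∃ L : NNReal, LipschitzOnWith L u (Set.Ici (0 : ℝ)))
    (hu0 : u 0 = f)
    (hflow : ∀ᵐ t ∂(MeasureTheory.volume), 0 < t →
      ∃ u' : EuclideanSpace ℝ (Fin n), HasDerivAt u u' t ∧ -u' ∈ subdiff J (u t)) :
    (∀ t : ℝ, 0 ≤ t →
      (Submodule.orthogonalProjectionOnto N (u t) : EuclideanSpace ℝ (Fin n)) =
        (Submodule.orthogonalProjectionOnto N f : EuclideanSpace ℝ (Fin n))) ∧
    (∀ t : ℝ, 0 ≤ t →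
      (∀ s : ℝ, 0 ≤ s → s ≤ t →
        u s - (Submodule.orthogonalProjectionOnto N (u s) : EuclideanSpace ℝ (Fin n)) ≠ 0) →
      ‖u t - (Submodule.orthogonalProjectionOnto N (u t) : EuclideanSpace ℝ (Fin n))‖ ≤
        ‖f - (Submodule.orthogonalProjectionOnto N f : EuclideanSpace ℝ (Fin n))‖ - c₀ * t) ∧
    (∀ t : ℝ, ‖f - (Submodule.orthogonalProjectionOnto N f : EuclideanSpace ℝ (Fin n))‖ / c₀ ≤ t →
      u t = (Submodule.orthogonalProjectionOnto N f : EuclideanSpace ℝ (Fin n))) := by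
  simp only [← Submodule.starProjection_apply]
  set P := N.starProjection
  have hJ : AbsHomogeneous J := hhom
  have hJN : ∀ w ∈ N, J w = 0 := fun w hw => show w ∈ {u | J u = 0} from hN ▸ hw
  obtain ⟨L, hL⟩ := hLip
  have hvel : ∀ᵐ t, 0 < t → ∃ u', HasDerivAt u u' t ∧ u' ∈ Nᗮ ∧
      ⟪u t - P (u t), u'⟫ ≤ -(c₀ * ‖u t - P (u t)‖) := by
    filter_upwards [hflow] with t ht htpos
    obtain ⟨u', hu', hsub⟩ := ht htpos
    have horth := mem_orthogonal_of_mem_subdiff (hJ.map_add_le hconv) hJN hsub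
    have hcoer := mul_norm_le_inner_of_mem_subdiff hJ hconv hJN hlower hsub
    rw [inner_neg_left, real_inner_comm] at hcoer
    exact ⟨u', hu', by simpa using Nᗮ.neg_mem horth, by linarith⟩
  have hcons (t : ℝ) (ht : 0 ≤ t) : P (u t) = P f := hu0 ▸
    N.starProjection_eq_of_ae_hasDerivAt_mem_orthogonal ht (hL.mono Icc_subset_Ici_self) <| by
      filter_upwards [hvel] with s hs hmem
      obtain ⟨u', hu', horth, -⟩ := hs hmem.1
      exact ⟨u', hu', horth⟩
  have hdecay : ∀ᵐ t, 0 < t → ∃ u', HasDerivAt u u' t ∧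
      ⟪u t - P f, u'⟫ ≤ -(c₀ * ‖u t - P f‖) := by
    filter_upwards [hvel] with t ht htpos
    obtain ⟨u', hu', -, hle⟩ := ht htpos
    exact ⟨u', hu', hcons t htpos.le ▸ hle⟩
  refine ⟨hcons, fun t ht hne => ?_, fun t hT =>
    eq_of_ae_inner_deriv_le_neg_mul_norm hc₀ hL hdecay (hu0 ▸ hT)⟩
  have hne' (s : ℝ) (hs : s ∈ Ioo 0 t) : u s ≠ P f :=
    sub_ne_zero.1 (by simpa [hcons s hs.1.le] using hne s hs.1.le hs.2.le)
  simpa [hcons t ht, hu0] using norm_sub_le_sub_mul_of_ae_inner_deriv_le ht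
    (hL.mono Icc_subset_Ici_self) hne' (by filter_upwards [hdecay] with s hs hmem using hs hmem.1)
end

section
/- Let J : ℝ^n → ℝ be convex and absolutely one-homogeneous and suppose J satisfies (PS), i.e. ∂J(0) is the convex hull of a finite set. Then the set { p ∈ ℝ^n : p is the minimal-norm element of ∂J(u) for some u ∈ ℝ^n } is finite. -/
/-!
For `u` fixed, positive homogeneity gives `∂J(u) = {p ∈ ∂J(0) | ⟪p, u⟫ = J u}`, and `J u` is the
maximum of `⟪·, u⟫` over `∂J(0)`. When `∂J(0)` is the convex hull of a finite set `F`, this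
exposed face is the convex hull of the points of `F` attaining the maximum. So every `∂J(u)` is
the convex hull of one of the finitely many subsets of `F`, and a convex set in a strictly convex
space has at most one element of minimal norm.
-/

open RealInnerProductSpace

theorem Convex.eq_of_isMinOn_norm {E : Type*} [NormedAddCommGroup E] [NormedSpace ℝ E]
    [StrictConvexSpace ℝ E] {C : Set E} (hC : Convex ℝ C) {p q : E} (hp : p ∈ C) (hq : q ∈ C)
    (hpmin : IsMinOn (‖·‖) C p) (hqmin : IsMinOn (‖·‖) C q) : p = q := by
  by_contra hne
  have hmid : (1 / 2 : ℝ) • p + (1 / 2 : ℝ) • q ∈ C :=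
    hC hp hq (by norm_num) (by norm_num) (by norm_num)
  have hlt : ‖(1 / 2 : ℝ) • p + (1 / 2 : ℝ) • q‖ < ‖p‖ :=
    norm_combo_lt_of_ne le_rfl (isMinOn_iff.1 hqmin p hp) hne (by norm_num) (by norm_num)
      (by norm_num)
  exact hlt.not_ge (isMinOn_iff.1 hpmin _ hmid)

theorem Set.Finite.setOf_isMinOn_norm {E ι : Type*} [NormedAddCommGroup E] [NormedSpace ℝ E]
    [StrictConvexSpace ℝ E] {C : ι → Set E} (hC : ∀ i, Convex ℝ (C i)) {s : Set ι}
    (hs : s.Finite) : {p | ∃ i ∈ s, p ∈ C i ∧ IsMinOn (‖·‖) (C i) p}.Finite := by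
  refine (hs.biUnion fun i _ => Set.Subsingleton.finite
    (s := {p | p ∈ C i ∧ IsMinOn (‖·‖) (C i) p}) ?_).subset ?_
  · rintro p ⟨hp, hpmin⟩ q ⟨hq, hqmin⟩
    exact (hC i).eq_of_isMinOn_norm hp hq hpmin hqmin
  · rintro p ⟨i, hi, hp⟩
    exact Set.mem_biUnion hi hp

theorem convexHull_inter_eq_convexHull_filter {E : Type*} [AddCommGroup E] [Module ℝ E]
    (f : E →ₗ[ℝ] ℝ) {c : ℝ} {F : Finset E} (hF : ∀ x ∈ F, f x ≤ c) :
    convexHull ℝ ↑F ∩ {p | f p = c} = convexHull ℝ ↑(F.filter (f · = c)) := by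
  refine subset_antisymm ?_ (Set.subset_inter
    (convexHull_mono (Finset.coe_subset.2 (Finset.filter_subset _ F)))
    (convexHull_min (fun x hx => (Finset.mem_filter.1 hx).2) (convex_hyperplane f.isLinear c)))
  rintro p ⟨hp, hfp⟩
  obtain ⟨w, hw0, hw1, rfl⟩ := Finset.mem_convexHull'.1 hp
  -- The defects `c - f x` are nonnegative and their `w`-average is `c - f p = 0`.
  have hdefect : ∑ x ∈ F, w x * (c - f x) = 0 := by
    simp only [Set.mem_ofPred_eq, map_sum, map_smul, smul_eq_mul] at hfp
    simp only [mul_sub, Finset.sum_sub_distrib, ← Finset.sum_mul, hw1, one_mul, hfp, sub_self]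
  have hsupp : ∀ x ∈ F, w x ≠ 0 → f x = c := by
    intro x hx hwx
    have hzero := (Finset.sum_eq_zero_iff_of_nonneg fun y hy =>
      mul_nonneg (hw0 y hy) (sub_nonneg.2 (hF y hy))).1 hdefect x hx
    linarith [(mul_eq_zero.1 hzero).resolve_left hwx]
  refine Finset.mem_convexHull'.2 ⟨w, fun x hx => hw0 x (Finset.mem_filter.1 hx).1, ?_, ?_⟩
  · rw [Finset.sum_filter_of_ne hsupp, hw1]
  · exact Finset.sum_filter_of_ne fun x hx hwx => hsupp x hx fun h => hwx (by simp [h])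

section Subdifferential

variable {n : ℕ} {J : EuclideanSpace ℝ (Fin n) → ℝ} {u p : EuclideanSpace ℝ (Fin n)}

theorem mem_subdiff_zero_iff (hJ0 : J 0 = 0) : p ∈ subdiff J 0 ↔ ∀ v, ⟪p, v⟫ ≤ J v := by
  simp [subdiff, hJ0]

theorem mem_subdiff_iff (hhom : ∀ s : ℝ, 0 ≤ s → ∀ u, J (s • u) = s * J u) :
    p ∈ subdiff J u ↔ p ∈ subdiff J 0 ∧ ⟪p, u⟫ = J u := by
  have hJ0 : J 0 = 0 := by simpa using hhom 0 le_rfl 0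
  rw [mem_subdiff_zero_iff hJ0]
  constructor
  · intro hp
    have hle : ⟪p, u⟫ ≤ J u := by
      have h := hp ((2 : ℝ) • u)
      rw [hhom 2 zero_le_two, two_smul, add_sub_cancel_right] at h
      linarith
    have hge : J u ≤ ⟪p, u⟫ := by
      have h := hp 0
      rw [hJ0, zero_sub, inner_neg_right] at h
      linarith
    have hpu : ⟪p, u⟫ = J u := le_antisymm hle hge
    refine ⟨fun v => ?_, hpu⟩
    have h := hp v
    rw [inner_sub_right, hpu] at h
    linarith
  · rintro ⟨hp0, hpu⟩ v
    have h := hp0 v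
    show J u + ⟪p, v - u⟫ ≤ J v
    rw [inner_sub_right, hpu]
    linarith

theorem exists_subset_subdiff_eq_convexHull
    (hhom : ∀ s : ℝ, 0 ≤ s → ∀ u, J (s • u) = s * J u) {F : Finset (EuclideanSpace ℝ (Fin n))}
    (hF : convexHull ℝ ↑F = subdiff J 0) (u : EuclideanSpace ℝ (Fin n)) :
    ∃ S ⊆ F, subdiff J u = convexHull ℝ ↑S := by
  have hJ0 : J 0 = 0 := by simpa using hhom 0 le_rfl 0
  have hFle : ∀ x ∈ F, (innerₗ _).flip u x ≤ J u := fun x hx =>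
    (mem_subdiff_zero_iff hJ0).1 (hF ▸ subset_convexHull ℝ _ hx) u
  refine ⟨F.filter ((innerₗ _).flip u · = J u), Finset.filter_subset _ F, ?_⟩
  rw [← convexHull_inter_eq_convexHull_filter _ hFle, hF]
  ext p
  exact mem_subdiff_iff hhom

end Subdifferential

theorem minimal_norm_subgradients_finite_general {n : ℕ}
    (J : EuclideanSpace ℝ (Fin n) → ℝ)
    (hhom : ∀ (s : ℝ) (u : EuclideanSpace ℝ (Fin n)), J (s • u) = |s| * J u)
    (hPS : ∃ F : Finset (EuclideanSpace ℝ (Fin n)),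
      convexHull ℝ (F : Set (EuclideanSpace ℝ (Fin n))) = subdiff J 0) :
    Set.Finite {p : EuclideanSpace ℝ (Fin n) |
      ∃ u : EuclideanSpace ℝ (Fin n),
        p ∈ subdiff J u ∧ ∀ q ∈ subdiff J u, ‖p‖ ≤ ‖q‖} := by
  obtain ⟨F, hF⟩ := hPS
  have hposhom : ∀ s : ℝ, 0 ≤ s → ∀ u, J (s • u) = s * J u := fun s hs u => by
    rw [hhom, abs_of_nonneg hs]
  refine (Set.Finite.setOf_isMinOn_norm (C := fun S : Finset _ => convexHull ℝ ↑S)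
    (fun _ => convex_convexHull ℝ _) F.powerset.finite_toSet).subset ?_
  rintro p ⟨u, hp, hmin⟩
  obtain ⟨S, hSF, hS⟩ := exists_subset_subdiff_eq_convexHull hposhom hF u
  rw [hS] at hp hmin
  exact ⟨S, Finset.mem_coe.2 (Finset.mem_powerset.2 hSF), hp, isMinOn_iff.2 hmin⟩

/-- If `J` is polyhedral, i.e. `∂J(0)` is the convex hull of a finite
set, then the set of all minimal-norm subgradients `{p | ∃ u, p is the minimal-norm
element of ∂J(u)}` is finite. -/
theorem minimal_norm_subgradients_finite {n : ℕ}
    (J : EuclideanSpace ℝ (Fin n) → ℝ)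
    (hconv : ConvexOn ℝ Set.univ J)
    (hhom : ∀ (s : ℝ) (u : EuclideanSpace ℝ (Fin n)), J (s • u) = |s| * J u)
    (hPS : ∃ F : Finset (EuclideanSpace ℝ (Fin n)),
      convexHull ℝ (F : Set (EuclideanSpace ℝ (Fin n))) = subdiff J 0) :
    Set.Finite {p : EuclideanSpace ℝ (Fin n) |
      ∃ u : EuclideanSpace ℝ (Fin n),
        p ∈ subdiff J u ∧ ∀ q ∈ subdiff J u, ‖p‖ ≤ ‖q‖} :=
  minimal_norm_subgradients_finite_general J hhom hPS
end
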